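/- arXiv:2507.13731 — 3 statements merged into one kernel-verified Lean document; each statement's English description precedes it below -/
import Mathlib

section
/- Let q ≥ 1 be a natural number, let X be an m × n complex matrix, and let Q be an n × r complex matrix with Qᴴ Q = I. Then ‖X · (I − Q Qᴴ)‖ ≤ ‖(Xᴴ X)^q · (I − Q Qᴴ)‖^(1/(2q)), where ‖·‖ denotes the L2 operator norm (spectral norm) of a matrix. -/
/-!
Put `P = 1 - Q Qᴴ`, a star projection, and `M = Xᴴ X`. Then `‖X P‖² = ‖P M P‖ ≤ ‖M P‖`, and the
C*-identity gives `‖Mᵏ⁺¹ P‖² = ‖(Mᵏ P)ᴴ (Mᵏ⁺² P)‖ ≤ ‖Mᵏ P‖ ‖Mᵏ⁺² P‖`: the sequence `‖Mᵏ P‖` is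
log-convex and starts at `‖P‖ ≤ 1`, so `‖M P‖^q ≤ ‖M^q P‖`.
-/

open Matrix
open scoped Matrix.Norms.L2Operator

section LogConvex

variable {v : ℕ → ℝ}

lemma pos_succ_of_sq_le_mul (hnn : ∀ k, 0 ≤ v k) (hv : ∀ k, v (k + 1) ^ 2 ≤ v k * v (k + 2))
    (h1 : 0 < v 1) (k : ℕ) : 0 < v (k + 1) := by
  induction k with
  | zero => exact h1
  | succ k ih =>
    refine (hnn _).lt_of_ne fun h ↦ ?_
    have := hv k
    rw [← h, mul_zero] at this
    exact (pow_pos ih 2).not_ge this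

lemma mul_le_mul_succ_of_sq_le_mul (hnn : ∀ k, 0 ≤ v k)
    (hv : ∀ k, v (k + 1) ^ 2 ≤ v k * v (k + 2)) (h1 : 0 < v 1) (k : ℕ) :
    v 1 * v k ≤ v 0 * v (k + 1) := by
  induction k with
  | zero => rw [mul_comm]
  | succ k ih =>
    have hpos := pos_succ_of_sq_le_mul hnn hv h1 k
    refine le_of_mul_le_mul_right ?_ hpos
    calc v 1 * v (k + 1) * v (k + 1) = v 1 * v (k + 1) ^ 2 := by ring
      _ ≤ v 1 * (v k * v (k + 2)) := mul_le_mul_of_nonneg_left (hv k) h1.le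
      _ = v 1 * v k * v (k + 2) := by ring
      _ ≤ v 0 * v (k + 1) * v (k + 2) := mul_le_mul_of_nonneg_right ih (hnn _)
      _ = v 0 * v (k + 1 + 1) * v (k + 1) := by ring

lemma pow_le_of_sq_le_mul (hnn : ∀ k, 0 ≤ v k) (hv0 : v 0 ≤ 1)
    (hv : ∀ k, v (k + 1) ^ 2 ≤ v k * v (k + 2)) {k : ℕ} (hk : k ≠ 0) : v 1 ^ k ≤ v k := by
  rcases (hnn 1).eq_or_lt with h1 | h1
  · rw [← h1, zero_pow hk]
    exact hnn k
  obtain ⟨k, rfl⟩ := Nat.exists_eq_succ_of_ne_zero hk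
  induction k with
  | zero => rw [pow_one]
  | succ k ih =>
    calc v 1 ^ (k + 2) = v 1 * v 1 ^ (k + 1) := pow_succ' _ _
      _ ≤ v 1 * v (k + 1) := mul_le_mul_of_nonneg_left (ih k.succ_ne_zero) h1.le
      _ ≤ v 0 * v (k + 2) := mul_le_mul_succ_of_sq_le_mul hnn hv h1 _
      _ ≤ v (k + 2) := mul_le_of_le_one_left (hnn _) hv0

end LogConvex

section CStarRing

variable {A : Type*} [NormedRing A] [StarRing A] [CStarRing A] {a p : A}

lemma IsSelfAdjoint.norm_pow_succ_mul_sq_le (ha : IsSelfAdjoint a) (hp : IsSelfAdjoint p)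
    (k : ℕ) : ‖a ^ (k + 1) * p‖ ^ 2 ≤ ‖a ^ k * p‖ * ‖a ^ (k + 2) * p‖ := by
  have hstar : star (a ^ (k + 1) * p) * (a ^ (k + 1) * p) =
      star (a ^ k * p) * (a ^ (k + 2) * p) := by
    simp only [star_mul, star_pow, ha.star_eq, hp.star_eq, mul_assoc]
    rw [← mul_assoc (a ^ (k + 1)), ← mul_assoc (a ^ k), ← pow_add, ← pow_add,
      show k + 1 + (k + 1) = k + (k + 2) by omega]
  calc ‖a ^ (k + 1) * p‖ ^ 2 = ‖star (a ^ (k + 1) * p) * (a ^ (k + 1) * p)‖ := by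
        rw [CStarRing.norm_star_mul_self, sq]
    _ = ‖star (a ^ k * p) * (a ^ (k + 2) * p)‖ := by rw [hstar]
    _ ≤ ‖a ^ k * p‖ * ‖a ^ (k + 2) * p‖ := by
        grw [norm_mul_le, norm_star]

lemma IsSelfAdjoint.norm_mul_pow_le_norm_pow_mul (ha : IsSelfAdjoint a) (hp : IsStarProjection p)
    {k : ℕ} (hk : k ≠ 0) : ‖a * p‖ ^ k ≤ ‖a ^ k * p‖ := by
  simpa using pow_le_of_sq_le_mul (v := fun k ↦ ‖a ^ k * p‖) (fun _ ↦ norm_nonneg _)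
    (by simpa using hp.norm_le) (ha.norm_pow_succ_mul_sq_le hp.isSelfAdjoint) hk

end CStarRing

namespace Matrix

variable {m n r : Type*} [Fintype m] [Fintype n]

lemma isStarProjection_mul_conjTranspose {α : Type*} [Semiring α] [StarRing α] [Fintype r]
    [DecidableEq r] {Q : Matrix n r α} (hQ : Qᴴ * Q = 1) : IsStarProjection (Q * Qᴴ) where
  isIdempotentElem := by
    rw [IsIdempotentElem, Matrix.mul_assoc, ← Matrix.mul_assoc Qᴴ, hQ, Matrix.one_mul]
  isSelfAdjoint := (isHermitian_mul_conjTranspose_self Q).isSelfAdjoint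

lemma l2_opNorm_mul_sq_le [DecidableEq n] {𝕜 : Type*} [RCLike 𝕜] (X : Matrix m n 𝕜)
    {P : Matrix n n 𝕜} (hP : IsStarProjection P) : ‖X * P‖ ^ 2 ≤ ‖Xᴴ * X * P‖ := by
  have hPH : Pᴴ = P := hP.isSelfAdjoint
  calc ‖X * P‖ ^ 2 = ‖P * (Xᴴ * X * P)‖ := by
        rw [sq, ← l2_opNorm_conjTranspose_mul_self, conjTranspose_mul, hPH]
        simp only [Matrix.mul_assoc]
    _ ≤ ‖P‖ * ‖Xᴴ * X * P‖ := l2_opNorm_mul _ _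
    _ ≤ ‖Xᴴ * X * P‖ := mul_le_of_le_one_left (norm_nonneg _) hP.norm_le

end Matrix

/-- Deterministic core of Theorem 3 of the paper (complex version): for `q ≥ 1`, an `m × n`
complex matrix `X` and an `n × r` matrix `Q` with `Qᴴ Q = I`,
`‖X (I - Q Qᴴ)‖ ≤ ‖(Xᴴ X)^q (I - Q Qᴴ)‖ ^ (1/(2q))` in the L2 operator norm. -/
theorem spectral_residual_root_bound {m n r : ℕ} (q : ℕ) (hq : 1 ≤ q)
    (X : Matrix (Fin m) (Fin n) ℂ) (Q : Matrix (Fin n) (Fin r) ℂ)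
    (hQ : Qᴴ * Q = 1) :
    ‖X * (1 - Q * Qᴴ)‖ ≤ ‖(Xᴴ * X) ^ q * (1 - Q * Qᴴ)‖ ^ (1 / (2 * (q : ℝ))) := by
  have hP : IsStarProjection (1 - Q * Qᴴ) := (isStarProjection_mul_conjTranspose hQ).one_sub
  have hpow : ‖X * (1 - Q * Qᴴ)‖ ^ (2 * q) ≤ ‖(Xᴴ * X) ^ q * (1 - Q * Qᴴ)‖ :=
    calc ‖X * (1 - Q * Qᴴ)‖ ^ (2 * q) = (‖X * (1 - Q * Qᴴ)‖ ^ 2) ^ q := pow_mul _ _ _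
      _ ≤ ‖Xᴴ * X * (1 - Q * Qᴴ)‖ ^ q := by grw [l2_opNorm_mul_sq_le X hP]
      _ ≤ _ := (isHermitian_conjTranspose_mul_self X).isSelfAdjoint.norm_mul_pow_le_norm_pow_mul
          hP (by omega)
  rw [one_div, Real.le_rpow_inv_iff_of_pos (norm_nonneg _) (norm_nonneg _) (by positivity)]
  exact_mod_cast hpow
end

section
/- Let A be an n × n positive semidefinite complex matrix, let q ≥ 1 be a natural number, and let v be a vector in ℂⁿ with Euclidean norm ‖v‖ ≤ 1. Then (Re(vᴴ A v))^q ≤ Re(vᴴ A^q v). -/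
/-!
Diagonalise `A = U D Uᴴ` with `U` unitary and `D = diag(λᵢ)`, `λᵢ ≥ 0`. Then `A ^ k = U Dᵏ Uᴴ`, so
with `w = Uᴴ v` every quadratic form `vᴴ Aᵏ v` equals `∑ |wᵢ|² λᵢᵏ`, and the weights `|wᵢ|²` sum to
`‖v‖² ≤ 1`. The claim is then Jensen's inequality for `t ↦ tᵠ` with sub-probability weights, which
follows from the weighted Hölder inequality.
-/

open Matrix
open scoped ComplexOrder

theorem Real.pow_sum_mul_le_sum_mul_pow_of_sum_le_one {ι : Type*} (s : Finset ι) (p d : ι → ℝ)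
    (hp : ∀ i, 0 ≤ p i) (hd : ∀ i, 0 ≤ d i) (hs : ∑ i ∈ s, p i ≤ 1) {q : ℕ} (hq : 1 ≤ q) :
    (∑ i ∈ s, p i * d i) ^ q ≤ ∑ i ∈ s, p i * d i ^ q := by
  have hq' : (1 : ℝ) ≤ q := by exact_mod_cast hq
  have hsum : 0 ≤ ∑ i ∈ s, p i * d i ^ q :=
    Finset.sum_nonneg fun i _ => mul_nonneg (hp i) (pow_nonneg (hd i) q)
  have holder : ∑ i ∈ s, p i * d i ≤ (∑ i ∈ s, p i * d i ^ q) ^ (q : ℝ)⁻¹ :=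
    calc ∑ i ∈ s, p i * d i
        ≤ (∑ i ∈ s, p i) ^ (1 - (q : ℝ)⁻¹) * (∑ i ∈ s, p i * d i ^ (q : ℝ)) ^ (q : ℝ)⁻¹ :=
          Real.inner_le_weight_mul_Lp_of_nonneg s hq' p d hp hd
      _ ≤ (∑ i ∈ s, p i * d i ^ q) ^ (q : ℝ)⁻¹ := by
          simp only [Real.rpow_natCast]
          refine mul_le_of_le_one_left (Real.rpow_nonneg hsum _) ?_
          exact Real.rpow_le_one (Finset.sum_nonneg fun i _ => hp i) hs
            (sub_nonneg.2 (inv_le_one_of_one_le₀ hq'))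
  calc (∑ i ∈ s, p i * d i) ^ q
      ≤ ((∑ i ∈ s, p i * d i ^ q) ^ (q : ℝ)⁻¹) ^ q :=
        pow_le_pow_left₀ (Finset.sum_nonneg fun i _ => mul_nonneg (hp i) (hd i)) holder q
    _ = ∑ i ∈ s, p i * d i ^ q := Real.rpow_inv_natCast_pow hsum (by omega)

namespace Matrix

variable {n : Type*} [Fintype n]

theorem star_dotProduct_mul_mul_star_mulVec {R : Type*} [CommSemiring R] [StarRing R]
    (U D : Matrix n n R) (x : n → R) :
    star x ⬝ᵥ (U * D * star U) *ᵥ x = star (star U *ᵥ x) ⬝ᵥ D *ᵥ (star U *ᵥ x) := by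
  simp only [star_mulVec, dotProduct_mulVec, vecMul_vecMul, mulVec_mulVec, star_eq_conjTranspose,
    conjTranspose_conjTranspose, Matrix.mul_assoc]

theorem star_dotProduct_diagonal_mulVec {R : Type*} [DecidableEq n] [CommSemiring R] [StarRing R]
    (g w : n → R) :
    star w ⬝ᵥ diagonal g *ᵥ w = ∑ i, g i * (star (w i) * w i) := by
  simp only [dotProduct, mulVec_diagonal, Pi.star_apply]
  exact Finset.sum_congr rfl fun i _ => by ring

namespace IsHermitian

variable {𝕜 : Type*} [DecidableEq n] [RCLike 𝕜] {A : Matrix n n 𝕜}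

theorem spectral_theorem_pow (hA : A.IsHermitian) (k : ℕ) :
    A ^ k = hA.eigenvectorUnitary * diagonal (fun i => (hA.eigenvalues i : 𝕜) ^ k) *
      star (hA.eigenvectorUnitary : Matrix n n 𝕜) := by
  conv_lhs => rw [hA.spectral_theorem]
  rw [← map_pow, diagonal_pow, Unitary.conjStarAlgAut_apply]
  rfl

theorem re_star_dotProduct_pow_mulVec (hA : A.IsHermitian) (k : ℕ) (x : n → 𝕜) :
    RCLike.re (star x ⬝ᵥ (A ^ k) *ᵥ x) =
      ∑ i, ‖(star (hA.eigenvectorUnitary : Matrix n n 𝕜) *ᵥ x) i‖ ^ 2 * hA.eigenvalues i ^ k := by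
  rw [hA.spectral_theorem_pow, star_dotProduct_mul_mul_star_mulVec,
    star_dotProduct_diagonal_mulVec, map_sum]
  refine Finset.sum_congr rfl fun i _ => ?_
  rw [RCLike.star_def, RCLike.conj_mul, ← RCLike.ofReal_pow, ← RCLike.ofReal_pow,
    ← RCLike.ofReal_mul, RCLike.ofReal_re, mul_comm]

end IsHermitian

end Matrix

/-- Jensen-inequality step in Lemma 2 of the paper: for a positive semidefinite `n × n`
complex matrix `A`, `q ≥ 1` and a vector `v` with Euclidean norm at most 1,
`(Re (vᴴ A v))^q ≤ Re (vᴴ A^q v)`. -/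
theorem posSemidef_quadForm_pow_le {n : ℕ} (A : Matrix (Fin n) (Fin n) ℂ)
    (hA : A.PosSemidef) (q : ℕ) (hq : 1 ≤ q)
    (v : EuclideanSpace ℂ (Fin n)) (hv : ‖v‖ ≤ 1) :
    (star (WithLp.equiv 2 (Fin n → ℂ) v) ⬝ᵥ A.mulVec (WithLp.equiv 2 (Fin n → ℂ) v)).re ^ q ≤
      (star (WithLp.equiv 2 (Fin n → ℂ) v) ⬝ᵥ (A ^ q).mulVec (WithLp.equiv 2 (Fin n → ℂ) v)).re := by
  set x := WithLp.equiv 2 (Fin n → ℂ) v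
  set w := star (hA.1.eigenvectorUnitary : Matrix (Fin n) (Fin n) ℂ) *ᵥ x
  have hquad (k : ℕ) : (star x ⬝ᵥ (A ^ k) *ᵥ x).re = ∑ i, ‖w i‖ ^ 2 * hA.1.eigenvalues i ^ k :=
    hA.1.re_star_dotProduct_pow_mulVec k x
  have hw : ∑ i, ‖w i‖ ^ 2 ≤ 1 :=
    calc ∑ i, ‖w i‖ ^ 2 = (star x ⬝ᵥ x).re := by simpa using (hquad 0).symm
      _ = ‖v‖ ^ 2 := by
          rw [dotProduct_comm]
          exact inner_self_eq_norm_sq (𝕜 := ℂ) v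
      _ ≤ 1 := pow_le_one₀ (norm_nonneg v) hv
  have hquad_one := hquad 1
  simp only [pow_one] at hquad_one
  rw [hquad_one, hquad q]
  exact Real.pow_sum_mul_le_sum_mul_pow_of_sum_le_one _ _ _ (fun i => sq_nonneg _)
    hA.eigenvalues_nonneg hw hq
end

section
/- Every m × n quaternion matrix X admits a quaternion singular value decomposition: there exist an m × m quaternion matrix U with Uᴴ U = I, an n × n quaternion matrix V with Vᴴ V = I, and a real-valued function σ on indices with σ₁ ≥ σ₂ ≥ … ≥ 0 such that X = U · Σ · Vᴴ, where Σ is the m × n matrix whose (i,j) entry equals the quaternion embedding of σᵢ when i = j and 0 otherwise. -/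
/-!
View `ℍⁿ` as the real Euclidean space `ℝ⁴ⁿ`. There `XᴴX` is a symmetric operator, so the
maximum of its Rayleigh quotient, `‖X‖²`, is an eigenvalue; a unit eigenvector `v` yields the
singular pair `X v = ‖X‖ u`, `Xᴴ u = ‖X‖ v`. Completing `u` and `v` to unitary matrices
(orthogonal complements are nonzero by counting `ℍ`-dimensions) conjugates `X` into the block
matrix `diag(‖X‖, B)` with `‖B‖ ≤ ‖X‖`, and an SVD of `B` extends to one of `X` whose singular
values are still nonincreasing.
-/

open Matrix
open scoped Quaternion

namespace Matrix

section DiagCons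

variable {α : Type*} {k l r : ℕ}

def diagCons [Zero α] (c : α) (A : Matrix (Fin k) (Fin l) α) :
    Matrix (Fin (k + 1)) (Fin (l + 1)) α :=
  of (Fin.cons (Fin.cons c 0) fun i => Fin.cons 0 (A i))

section Zero

variable [Zero α] (c : α) (A : Matrix (Fin k) (Fin l) α)

@[simp] theorem diagCons_zero_zero : diagCons c A 0 0 = c := rfl

@[simp] theorem diagCons_zero_succ (j : Fin l) : diagCons c A 0 j.succ = 0 := rfl

@[simp] theorem diagCons_succ_zero (i : Fin k) : diagCons c A i.succ 0 = 0 := rfl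

@[simp] theorem diagCons_succ_succ (i : Fin k) (j : Fin l) :
    diagCons c A i.succ j.succ = A i j :=
  rfl

theorem eq_diagCons_submatrix_succ (Y : Matrix (Fin (k + 1)) (Fin (l + 1)) α)
    (hcol : ∀ i : Fin k, Y i.succ 0 = 0) (hrow : ∀ j : Fin l, Y 0 j.succ = 0) :
    Y = diagCons (Y 0 0) (Y.submatrix Fin.succ Fin.succ) := by
  ext i j
  cases i using Fin.cases <;> cases j using Fin.cases <;> simp [hcol, hrow]

end Zero

theorem diagCons_mul [Semiring α] (c d : α) (A : Matrix (Fin k) (Fin l) α)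
    (B : Matrix (Fin l) (Fin r) α) : diagCons c A * diagCons d B = diagCons (c * d) (A * B) := by
  ext i j
  cases i using Fin.cases <;> cases j using Fin.cases <;> simp [mul_apply, Fin.sum_univ_succ]

theorem conjTranspose_diagCons [AddMonoid α] [StarAddMonoid α] (c : α)
    (A : Matrix (Fin k) (Fin l) α) : (diagCons c A)ᴴ = diagCons (star c) Aᴴ := by
  ext i j
  cases i using Fin.cases <;> cases j using Fin.cases <;> simp

theorem diagCons_one [Semiring α] : diagCons (1 : α) (1 : Matrix (Fin k) (Fin k) α) = 1 := by
  ext i j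
  cases i using Fin.cases <;> cases j using Fin.cases <;>
    simp [one_apply, Fin.succ_ne_zero, (Fin.succ_ne_zero _).symm]

theorem diagCons_mulVec_cons [Semiring α] (c a : α) (A : Matrix (Fin k) (Fin l) α)
    (w : Fin l → α) : diagCons c A *ᵥ Fin.cons a w = Fin.cons (c * a) (A *ᵥ w) := by
  ext i
  cases i using Fin.cases <;> simp [mulVec, dotProduct, Fin.sum_univ_succ]

end DiagCons

section StarRing

variable {α : Type*} {m n : Type*} [Fintype m] [Fintype n]

theorem star_mulVec_dotProduct [NonUnitalSemiring α] [StarRing α] (A : Matrix m n α)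
    (v : n → α) (w : m → α) : star (A *ᵥ v) ⬝ᵥ w = star v ⬝ᵥ Aᴴ *ᵥ w := by
  rw [star_mulVec, dotProduct_mulVec]

variable [Semiring α] [StarRing α] [DecidableEq n]

theorem conjTranspose_mul_self_mul_eq_one {A B : Matrix n n α} (hA : Aᴴ * A = 1)
    (hB : Bᴴ * B = 1) : (A * B)ᴴ * (A * B) = 1 := by
  rw [conjTranspose_mul, Matrix.mul_assoc, ← Matrix.mul_assoc Aᴴ, hA, Matrix.one_mul, hB]

theorem star_mulVec_dotProduct_mulVec {A : Matrix n n α} (hA : Aᴴ * A = 1) (v w : n → α) :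
    star (A *ᵥ v) ⬝ᵥ A *ᵥ w = star v ⬝ᵥ w := by
  rw [star_mulVec_dotProduct, mulVec_mulVec, hA, one_mulVec]

theorem conjTranspose_mul_self_snoc {k : ℕ} {M : Matrix m (Fin k) α} {y : m → α}
    (hM : Mᴴ * M = 1) (hMy : Mᴴ *ᵥ y = 0) (hy : star y ⬝ᵥ y = 1) :
    (of fun i => Fin.snoc (M i) (y i))ᴴ * of (fun i => Fin.snoc (M i) (y i)) = 1 := by
  have hyM : star y ᵥ* M = 0 := by
    rw [← conjTranspose_conjTranspose M, ← star_mulVec, hMy, star_zero]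
  ext a b
  cases a using Fin.lastCases <;> cases b using Fin.lastCases
  · simpa [mul_apply, dotProduct] using hy
  · simpa [mul_apply, vecMul, dotProduct, one_apply, (Fin.castSucc_lt_last _).ne']
      using congrFun hyM _
  · simpa [mul_apply, mulVec, dotProduct, one_apply, (Fin.castSucc_lt_last _).ne]
      using congrFun hMy _
  · simpa [mul_apply, one_apply, Fin.castSucc_inj] using congrFun₂ hM _ _

end StarRing

/-- `x ↦ x ᵥ* M` is linear for the left scalar action, so rank–nullity applies to it, and `star`
carries its kernel onto that of `Mᴴ *ᵥ ·`. -/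
theorem exists_ne_zero_conjTranspose_mulVec_eq_zero {K : Type*} [DivisionRing K] [StarRing K]
    {m n : Type*} [Fintype m] [Fintype n] (M : Matrix m n K)
    (h : Fintype.card n < Fintype.card m) : ∃ y ≠ 0, Mᴴ *ᵥ y = 0 := by
  obtain ⟨x, hx, hx0⟩ := Submodule.exists_mem_ne_zero_of_ne_bot
    (M.vecMulLinear.ker_ne_bot_of_finrank_lt (by simpa using h))
  refine ⟨star x, star_ne_zero.2 hx0, ?_⟩
  rw [← star_vecMul, ← vecMulLinear_apply, LinearMap.mem_ker.1 hx, star_zero]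

end Matrix

namespace QuaternionMatrix

variable {m n : ℕ}

/-- `X` acting on `ℍⁿ`, regarded as a real Euclidean space; `‖toL2 X‖` is the largest singular
value of `X`. -/
noncomputable def toL2 (X : Matrix (Fin m) (Fin n) ℍ[ℝ]) :
    WithLp 2 (Fin n → ℍ[ℝ]) →L[ℝ] WithLp 2 (Fin m → ℍ[ℝ]) :=
  LinearMap.toContinuousLinearMap <|
    (WithLp.linearEquiv 2 ℝ _).symm.toLinearMap ∘ₗ mulVecBilin ℝ ℝ X ∘ₗ
      (WithLp.linearEquiv 2 ℝ _).toLinearMap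

@[simp] theorem toL2_toLp (X : Matrix (Fin m) (Fin n) ℍ[ℝ]) (v : Fin n → ℍ[ℝ]) :
    toL2 X (WithLp.toLp 2 v) = WithLp.toLp 2 (X *ᵥ v) := rfl

theorem toL2_mul {l : ℕ} (A : Matrix (Fin l) (Fin m) ℍ[ℝ]) (B : Matrix (Fin m) (Fin n) ℍ[ℝ]) :
    toL2 (A * B) = (toL2 A).comp (toL2 B) := by
  ext1 ⟨v⟩
  simp [mulVec_mulVec]

theorem eq_zero_of_toL2_eq_zero {X : Matrix (Fin m) (Fin n) ℍ[ℝ]} (hX : toL2 X = 0) : X = 0 := by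
  refine ext_of_mulVec_single fun j => ?_
  have h : toL2 X (WithLp.toLp 2 (Pi.single j 1)) = 0 := by rw [hX]; rfl
  rw [toL2_toLp] at h
  rw [zero_mulVec]
  exact congrArg WithLp.ofLp h

theorem inner_toLp (v w : Fin n → ℍ[ℝ]) :
    inner ℝ (WithLp.toLp 2 v) (WithLp.toLp 2 w) = (star v ⬝ᵥ w).re := by
  refine (PiLp.inner_apply _ _).trans
    (.trans ?_ (map_sum (QuaternionAlgebra.reₗ (R := ℝ) (-1) 0 (-1)) _ _).symm)
  refine Finset.sum_congr rfl fun i _ => ?_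
  change _ = (star (v i) * w i).re
  simp [Quaternion.inner_def, Quaternion.re_mul]

theorem star_dotProduct_self (v : Fin n → ℍ[ℝ]) :
    star v ⬝ᵥ v = ((‖WithLp.toLp 2 v‖ ^ 2 : ℝ) : ℍ[ℝ]) := by
  have hself : star (star v ⬝ᵥ v) = star v ⬝ᵥ v := (star_dotProduct v v).symm
  rw [Quaternion.star_eq_self.mp hself, ← real_inner_self_eq_norm_sq, inner_toLp]

theorem star_dotProduct_self_eq_one_iff (v : Fin n → ℍ[ℝ]) :
    star v ⬝ᵥ v = 1 ↔ ‖WithLp.toLp 2 v‖ = 1 := by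
  rw [star_dotProduct_self, ← Quaternion.coe_one, Quaternion.coe_inj,
    pow_eq_one_iff_of_nonneg (norm_nonneg _) two_ne_zero]

theorem norm_toLp_cons_zero (w : Fin n → ℍ[ℝ]) :
    ‖WithLp.toLp 2 (Fin.cons 0 w : Fin (n + 1) → ℍ[ℝ])‖ = ‖WithLp.toLp 2 w‖ := by
  rw [← sq_eq_sq₀ (norm_nonneg _) (norm_nonneg _), PiLp.norm_sq_eq_of_L2,
    PiLp.norm_sq_eq_of_L2, Fin.sum_univ_succ]
  simp

theorem norm_toLp_mulVec {U : Matrix (Fin n) (Fin n) ℍ[ℝ]} (hU : Uᴴ * U = 1)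
    (v : Fin n → ℍ[ℝ]) : ‖WithLp.toLp 2 (U *ᵥ v)‖ = ‖WithLp.toLp 2 v‖ := by
  have h := star_mulVec_dotProduct_mulVec hU v v
  rw [star_dotProduct_self, star_dotProduct_self, Quaternion.coe_inj] at h
  exact (sq_eq_sq₀ (norm_nonneg _) (norm_nonneg _)).1 h

theorem norm_toL2_le_one {U : Matrix (Fin n) (Fin n) ℍ[ℝ]} (hU : Uᴴ * U = 1) : ‖toL2 U‖ ≤ 1 :=
  (toL2 U).opNorm_le_bound zero_le_one <| by
    rintro ⟨v⟩
    simp [norm_toLp_mulVec hU]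

theorem norm_toL2_conjTranspose_mul_mul_le {U : Matrix (Fin m) (Fin m) ℍ[ℝ]}
    {V : Matrix (Fin n) (Fin n) ℍ[ℝ]} (hU : Uᴴ * U = 1) (hV : Vᴴ * V = 1)
    (X : Matrix (Fin m) (Fin n) ℍ[ℝ]) : ‖toL2 (Uᴴ * X * V)‖ ≤ ‖toL2 X‖ := by
  have hU' : Uᴴᴴ * Uᴴ = 1 := by rw [conjTranspose_conjTranspose, mul_eq_one_comm, hU]
  rw [toL2_mul, toL2_mul]
  calc ‖((toL2 Uᴴ).comp (toL2 X)).comp (toL2 V)‖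
      ≤ ‖toL2 Uᴴ‖ * ‖toL2 X‖ * ‖toL2 V‖ :=
        (ContinuousLinearMap.opNorm_comp_le _ _).trans
          (by gcongr; exact ContinuousLinearMap.opNorm_comp_le _ _)
    _ ≤ 1 * ‖toL2 X‖ * 1 := by gcongr <;> exact norm_toL2_le_one ‹_›
    _ = ‖toL2 X‖ := by ring

theorem norm_toL2_le_norm_toL2_diagCons (c : ℍ[ℝ]) (B : Matrix (Fin m) (Fin n) ℍ[ℝ]) :
    ‖toL2 B‖ ≤ ‖toL2 (diagCons c B)‖ := by
  refine (toL2 B).opNorm_le_bound (by positivity) ?_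
  rintro ⟨w⟩
  have h := (toL2 (diagCons c B)).le_opNorm (WithLp.toLp 2 (Fin.cons 0 w))
  rwa [toL2_toLp, diagCons_mulVec_cons, mul_zero, norm_toLp_cons_zero, norm_toLp_cons_zero] at h

theorem isSymmetric_toL2 {A : Matrix (Fin n) (Fin n) ℍ[ℝ]} (hA : A.IsHermitian) :
    (toL2 A : WithLp 2 (Fin n → ℍ[ℝ]) →ₗ[ℝ] _).IsSymmetric := by
  rintro ⟨x⟩ ⟨y⟩
  simp only [ContinuousLinearMap.coe_coe, toL2_toLp, inner_toLp, star_mulVec_dotProduct, hA.eq]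

theorem exists_maximal_eigenvector {A : Matrix (Fin n) (Fin n) ℍ[ℝ]} (hA : A.IsHermitian)
    (hn : 0 < n) :
    ∃ (v : Fin n → ℍ[ℝ]) (μ : ℝ), star v ⬝ᵥ v = 1 ∧ A *ᵥ v = μ • v ∧
      ∀ w, (star w ⬝ᵥ A *ᵥ w).re ≤ μ * ‖WithLp.toLp 2 w‖ ^ 2 := by
  have : Nontrivial (WithLp 2 (Fin n → ℍ[ℝ])) := by
    have : Nonempty (Fin n) := ⟨⟨0, hn⟩⟩
    infer_instance
  set T : WithLp 2 (Fin n → ℍ[ℝ]) →ₗ[ℝ] WithLp 2 (Fin n → ℍ[ℝ]) := (toL2 A).toLinearMap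
  have hbdd : BddAbove (Set.range fun x : {x : WithLp 2 (Fin n → ℍ[ℝ]) // x ≠ 0} =>
      RCLike.re (inner ℝ (T x) (x : WithLp 2 (Fin n → ℍ[ℝ]))) /
        ‖(x : WithLp 2 (Fin n → ℍ[ℝ]))‖ ^ 2) :=
    ⟨‖toL2 A‖, Set.forall_mem_range.2 fun x =>
      (le_abs_self _).trans ((toL2 A).rayleighQuotient_le_norm x)⟩
  obtain ⟨x, hx⟩ :=
    (isSymmetric_toL2 hA).hasEigenvalue_iSup_of_finiteDimensional.exists_hasEigenvector
  set μ := ⨆ x : {x : WithLp 2 (Fin n → ℍ[ℝ]) // x ≠ 0},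
    RCLike.re (inner ℝ (T x) (x : WithLp 2 (Fin n → ℍ[ℝ]))) / ‖(x : WithLp 2 (Fin n → ℍ[ℝ]))‖ ^ 2
  have hTx : T (‖x‖⁻¹ • x) = μ • (‖x‖⁻¹ • x) := by
    rw [map_smul, hx.apply_eq_smul, smul_comm]
    rfl
  refine ⟨(‖x‖⁻¹ • x).ofLp, μ, ?_, congrArg WithLp.ofLp hTx, fun w => ?_⟩
  · rw [star_dotProduct_self_eq_one_iff, WithLp.toLp_ofLp, norm_smul, norm_inv, norm_norm,
      inv_mul_cancel₀ (norm_ne_zero_iff.2 hx.2)]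
  · rcases eq_or_ne w 0 with rfl | hw
    · simp
    have hw' : WithLp.toLp 2 w ≠ 0 := by simpa using hw
    have := le_ciSup hbdd ⟨WithLp.toLp 2 w, hw'⟩
    rw [div_le_iff₀ (by positivity)] at this
    calc (star w ⬝ᵥ A *ᵥ w).re
        = RCLike.re (inner ℝ (T (WithLp.toLp 2 w)) (WithLp.toLp 2 w)) := by
          simp [T, real_inner_comm, inner_toLp]
      _ ≤ μ * ‖WithLp.toLp 2 w‖ ^ 2 := this

theorem exists_top_right_singular_vector (X : Matrix (Fin m) (Fin n) ℍ[ℝ]) (hn : 0 < n) :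
    ∃ v : Fin n → ℍ[ℝ], star v ⬝ᵥ v = 1 ∧ (Xᴴ * X) *ᵥ v = ‖toL2 X‖ ^ 2 • v := by
  obtain ⟨v, μ, hv, hXv, hle⟩ :=
    exists_maximal_eigenvector (isHermitian_conjTranspose_mul_self X) hn
  have hquad (w : Fin n → ℍ[ℝ]) :
      (star w ⬝ᵥ (Xᴴ * X) *ᵥ w).re = ‖toL2 X (WithLp.toLp 2 w)‖ ^ 2 := by
    rw [← mulVec_mulVec, ← star_mulVec_dotProduct, star_dotProduct_self, toL2_toLp]
    rfl
  have hμ : μ = ‖toL2 X (WithLp.toLp 2 v)‖ ^ 2 := by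
    rw [← hquad, hXv, dotProduct_smul, hv]
    simp
  have hμ0 : 0 ≤ μ := hμ ▸ sq_nonneg _
  suffices μ = ‖toL2 X‖ ^ 2 from ⟨v, hv, this ▸ hXv⟩
  refine le_antisymm ?_ ?_
  · rw [hμ]
    gcongr
    simpa [(star_dotProduct_self_eq_one_iff v).1 hv] using (toL2 X).le_opNorm (WithLp.toLp 2 v)
  · have hle' : ‖toL2 X‖ ≤ √μ := (toL2 X).opNorm_le_bound (Real.sqrt_nonneg _) <| by
      rintro ⟨w⟩
      rw [← Real.sqrt_sq (norm_nonneg (toL2 X _)), ← Real.sqrt_sq (norm_nonneg (WithLp.toLp 2 w)),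
        ← Real.sqrt_mul hμ0, ← hquad]
      exact Real.sqrt_le_sqrt (hle w)
    calc ‖toL2 X‖ ^ 2 ≤ √μ ^ 2 := by gcongr
      _ = μ := Real.sq_sqrt hμ0

theorem exists_unit_conjTranspose_mulVec_eq_zero {k : ℕ} (M : Matrix (Fin n) (Fin k) ℍ[ℝ])
    (hk : k < n) : ∃ y, star y ⬝ᵥ y = 1 ∧ Mᴴ *ᵥ y = 0 := by
  obtain ⟨y, hy, hMy⟩ := exists_ne_zero_conjTranspose_mulVec_eq_zero M (by simpa using hk)
  refine ⟨‖WithLp.toLp 2 y‖⁻¹ • y, ?_, by rw [mulVec_smul, hMy, smul_zero]⟩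
  rw [star_dotProduct_self_eq_one_iff, WithLp.toLp_smul, norm_smul, norm_inv, norm_norm,
    inv_mul_cancel₀ (by simpa using hy)]

theorem exists_unitary_submatrix_castLE_eq {k : ℕ} (M : Matrix (Fin n) (Fin k) ℍ[ℝ])
    (hM : Mᴴ * M = 1) (hk : k ≤ n) :
    ∃ W : Matrix (Fin n) (Fin n) ℍ[ℝ], Wᴴ * W = 1 ∧ W.submatrix id (Fin.castLE hk) = M := by
  obtain ⟨d, hd⟩ := Nat.exists_eq_add_of_le hk
  induction d generalizing k with
  | zero =>
    obtain rfl : k = n := by omega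
    exact ⟨M, hM, Matrix.ext fun i a => by simp⟩
  | succ d ih =>
    obtain ⟨y, hy, hMy⟩ := exists_unit_conjTranspose_mulVec_eq_zero M (by omega)
    obtain ⟨W, hW, hWM⟩ := ih (of fun i => Fin.snoc (M i) (y i))
      (conjTranspose_mul_self_snoc hM hMy hy) (by omega) (by omega)
    exact ⟨W, hW, Matrix.ext fun i a => by simpa using congrFun₂ hWM i a.castSucc⟩

theorem exists_unitary_mulVec_single_zero_eq (u : Fin (n + 1) → ℍ[ℝ]) (hu : star u ⬝ᵥ u = 1) :
    ∃ W : Matrix (Fin (n + 1)) (Fin (n + 1)) ℍ[ℝ], Wᴴ * W = 1 ∧ W *ᵥ Pi.single 0 1 = u := by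
  obtain ⟨W, hW, hWu⟩ := exists_unitary_submatrix_castLE_eq (replicateCol (Fin 1) u)
    (Matrix.ext fun a b => by
      obtain rfl := Subsingleton.elim a b
      simpa [mul_apply, dotProduct] using hu)
    (by omega)
  refine ⟨W, hW, ?_⟩
  funext i
  simpa using congrFun₂ hWu i 0

theorem conjTranspose_mul_mul_mulVec_single {U : Matrix (Fin m) (Fin m) ℍ[ℝ]}
    {V : Matrix (Fin n) (Fin n) ℍ[ℝ]} {X : Matrix (Fin m) (Fin n) ℍ[ℝ]} (hU : Uᴴ * U = 1)
    {i : Fin m} {j : Fin n} {c : ℝ}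
    (h : X *ᵥ (V *ᵥ Pi.single j 1) = c • U *ᵥ Pi.single i 1) :
    (Uᴴ * X * V) *ᵥ Pi.single j 1 = c • Pi.single i 1 := by
  rw [← mulVec_mulVec, ← mulVec_mulVec, h, mulVec_smul, mulVec_mulVec, hU, one_mulVec]

theorem exists_singular_pair {X : Matrix (Fin m) (Fin n) ℍ[ℝ]} (hX : X ≠ 0) :
    ∃ u v, star u ⬝ᵥ u = 1 ∧ star v ⬝ᵥ v = 1 ∧
      X *ᵥ v = ‖toL2 X‖ • u ∧ Xᴴ *ᵥ u = ‖toL2 X‖ • v := by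
  set σ := ‖toL2 X‖
  have hσ : σ ≠ 0 := (ContinuousLinearMap.opNorm_zero_iff _).not.2 (mt eq_zero_of_toL2_eq_zero hX)
  have hn : 0 < n := Nat.pos_of_ne_zero fun hn => hX (by subst hn; exact Subsingleton.elim _ _)
  obtain ⟨v, hv, hXXv⟩ := exists_top_right_singular_vector X hn
  set u := σ⁻¹ • X *ᵥ v
  have hXu : Xᴴ *ᵥ u = σ • v := by
    rw [mulVec_smul, mulVec_mulVec, hXXv, smul_smul, sq, inv_mul_cancel_left₀ hσ]
  have hstar : star u = σ⁻¹ • star (X *ᵥ v) := funext fun i => Quaternion.star_smul _ _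
  refine ⟨u, v, ?_, hv, by rw [smul_smul, mul_inv_cancel₀ hσ, one_smul], hXu⟩
  rw [hstar, smul_dotProduct, star_mulVec_dotProduct, hXu, dotProduct_smul, hv, smul_smul,
    inv_mul_cancel₀ hσ, one_smul]

theorem exists_eq_mul_diagCons_mul (X : Matrix (Fin (m + 1)) (Fin (n + 1)) ℍ[ℝ]) (hX : X ≠ 0) :
    ∃ (U : Matrix (Fin (m + 1)) (Fin (m + 1)) ℍ[ℝ]) (V : Matrix (Fin (n + 1)) (Fin (n + 1)) ℍ[ℝ])
      (B : Matrix (Fin m) (Fin n) ℍ[ℝ]), Uᴴ * U = 1 ∧ Vᴴ * V = 1 ∧ ‖toL2 B‖ ≤ ‖toL2 X‖ ∧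
      X = U * diagCons ((‖toL2 X‖ : ℝ) : ℍ[ℝ]) B * Vᴴ := by
  set σ := ‖toL2 X‖
  obtain ⟨u, v, hu, hv, hXv, hXu⟩ := exists_singular_pair hX
  obtain ⟨U, hU, hUu⟩ := exists_unitary_mulVec_single_zero_eq u hu
  obtain ⟨V, hV, hVv⟩ := exists_unitary_mulVec_single_zero_eq v hv
  set Y := Uᴴ * X * V
  have hYcol : Y *ᵥ Pi.single 0 1 = σ • Pi.single 0 1 :=
    conjTranspose_mul_mul_mulVec_single hU (by rw [hVv, hUu, hXv])
  have hYrow : Yᴴ *ᵥ Pi.single 0 1 = σ • Pi.single 0 1 := by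
    rw [conjTranspose_mul, conjTranspose_mul, conjTranspose_conjTranspose, ← Matrix.mul_assoc]
    exact conjTranspose_mul_mul_mulVec_single hV (by rw [hVv, hUu, hXu])
  have hY : Y = diagCons (σ : ℍ[ℝ]) (Y.submatrix Fin.succ Fin.succ) := by
    have h00 : Y 0 0 = σ := by
      rw [← Quaternion.algebraMap_def, Algebra.algebraMap_eq_smul_one]
      simpa using congrFun hYcol 0
    rw [← h00]
    exact eq_diagCons_submatrix_succ Y (fun i => by simpa using congrFun hYcol i.succ)
      (fun j => by simpa using congrFun hYrow j.succ)
  refine ⟨U, V, Y.submatrix Fin.succ Fin.succ, hU, hV, ?_, ?_⟩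
  · calc ‖toL2 (Y.submatrix Fin.succ Fin.succ)‖ ≤ ‖toL2 Y‖ := by
          rw [hY]
          exact norm_toL2_le_norm_toL2_diagCons _ _
      _ ≤ σ := norm_toL2_conjTranspose_mul_mul_le hU hV X
  · rw [← hY, Matrix.mul_assoc, Matrix.mul_assoc, mul_eq_one_comm.1 hV, Matrix.mul_one,
      ← Matrix.mul_assoc, mul_eq_one_comm.1 hU, Matrix.one_mul]

noncomputable def rectDiagonal (σ : ℕ → ℝ) : Matrix (Fin m) (Fin n) ℍ[ℝ] :=
  of fun i j => if (i : ℕ) = (j : ℕ) then ((σ i : ℝ) : ℍ[ℝ]) else 0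

theorem rectDiagonal_cons (c : ℝ) (σ : ℕ → ℝ) :
    (rectDiagonal (fun | 0 => c | i + 1 => σ i) : Matrix (Fin (m + 1)) (Fin (n + 1)) ℍ[ℝ]) =
      diagCons (c : ℍ[ℝ]) (rectDiagonal σ) := by
  ext i j : 1
  cases i using Fin.cases <;> cases j using Fin.cases <;> simp [rectDiagonal]

structure IsSVD (X : Matrix (Fin m) (Fin n) ℍ[ℝ]) (U : Matrix (Fin m) (Fin m) ℍ[ℝ])
    (V : Matrix (Fin n) (Fin n) ℍ[ℝ]) (σ : ℕ → ℝ) : Prop where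
  left_unitary : Uᴴ * U = 1
  right_unitary : Vᴴ * V = 1
  nonneg : ∀ i, 0 ≤ σ i
  antitone : Antitone σ
  eq_mul_rectDiagonal_mul : X = U * (rectDiagonal σ : Matrix (Fin m) (Fin n) ℍ[ℝ]) * Vᴴ

theorem isSVD_zero : IsSVD (0 : Matrix (Fin m) (Fin n) ℍ[ℝ]) 1 1 0 :=
  ⟨by simp, by simp, fun _ => le_rfl, antitone_const, by ext i j : 1; simp [rectDiagonal]⟩

theorem IsSVD.of_eq_mul_diagCons_mul {B : Matrix (Fin m) (Fin n) ℍ[ℝ]} {U₂ V₂ σ}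
    (h : IsSVD B U₂ V₂ σ) {U : Matrix (Fin (m + 1)) (Fin (m + 1)) ℍ[ℝ]}
    {V : Matrix (Fin (n + 1)) (Fin (n + 1)) ℍ[ℝ]} {c : ℝ} {X} (hU : Uᴴ * U = 1)
    (hV : Vᴴ * V = 1) (hc : ∀ i, σ i ≤ c) (hX : X = U * diagCons (c : ℍ[ℝ]) B * Vᴴ) :
    IsSVD X (U * diagCons 1 U₂) (V * diagCons 1 V₂) (fun | 0 => c | i + 1 => σ i) := by
  have unitary_diagCons {k} {W : Matrix (Fin k) (Fin k) ℍ[ℝ]} (hW : Wᴴ * W = 1) :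
      (diagCons 1 W)ᴴ * diagCons 1 W = 1 := by
    rw [conjTranspose_diagCons, diagCons_mul, star_one, one_mul, hW, diagCons_one]
  refine ⟨conjTranspose_mul_self_mul_eq_one hU (unitary_diagCons h.left_unitary),
    conjTranspose_mul_self_mul_eq_one hV (unitary_diagCons h.right_unitary), ?_, ?_, ?_⟩
  · rintro (_ | i)
    exacts [(h.nonneg 0).trans (hc 0), h.nonneg i]
  · refine antitone_nat_of_succ_le ?_
    rintro (_ | i)
    exacts [hc 0, h.antitone i.le_succ]
  · rw [hX, h.eq_mul_rectDiagonal_mul, rectDiagonal_cons, conjTranspose_mul,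
      conjTranspose_diagCons, star_one]
    simp only [Matrix.mul_assoc, diagCons_mul, one_mul]
    rw [← Matrix.mul_assoc (diagCons _ _), diagCons_mul, mul_one, Matrix.mul_assoc U₂]

/-- The bound by `‖toL2 X‖` is what keeps the singular values nonincreasing through the
induction. -/
theorem exists_isSVD_forall_le_norm (X : Matrix (Fin m) (Fin n) ℍ[ℝ]) :
    ∃ U V σ, IsSVD X U V σ ∧ ∀ i, σ i ≤ ‖toL2 X‖ := by
  induction n generalizing m with
  | zero => exact ⟨1, 1, 0, Subsingleton.elim 0 X ▸ isSVD_zero, fun _ => by positivity⟩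
  | succ n ih =>
    rcases eq_or_ne X 0 with rfl | hX
    · exact ⟨1, 1, 0, isSVD_zero, fun _ => by positivity⟩
    obtain ⟨m, rfl⟩ : ∃ m', m = m' + 1 :=
      Nat.exists_eq_succ_of_ne_zero fun hm => hX (by subst hm; exact Subsingleton.elim _ _)
    obtain ⟨U, V, B, hU, hV, hB, hXeq⟩ := exists_eq_mul_diagCons_mul X hX
    obtain ⟨U₂, V₂, σ, hσ, hσB⟩ := ih B
    have hσX : ∀ i, σ i ≤ ‖toL2 X‖ := fun i => (hσB i).trans hB
    refine ⟨_, _, _, hσ.of_eq_mul_diagCons_mul hU hV hσX hXeq, ?_⟩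
    rintro (_ | i)
    exacts [le_rfl, hσX i]

end QuaternionMatrix

/-- Quaternion singular value decomposition (QSVD, Zhang 1997): every `m × n` quaternion
matrix `X` factors as `X = U Σ Vᴴ` with `U`, `V` unitary quaternion matrices and `Σ` the
`m × n` matrix whose diagonal entries are nonincreasing nonnegative reals. -/
theorem quaternion_svd_exists {m n : ℕ} (X : Matrix (Fin m) (Fin n) ℍ[ℝ]) :
    ∃ (U : Matrix (Fin m) (Fin m) ℍ[ℝ]) (V : Matrix (Fin n) (Fin n) ℍ[ℝ]) (σ : ℕ → ℝ),
      Uᴴ * U = 1 ∧ Vᴴ * V = 1 ∧ (∀ i, 0 ≤ σ i) ∧ (∀ i j, i ≤ j → σ j ≤ σ i) ∧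
      X = U * (Matrix.of fun (i : Fin m) (j : Fin n) =>
        if (i : ℕ) = (j : ℕ) then ((σ (i : ℕ) : ℝ) : ℍ[ℝ]) else 0) * Vᴴ := by
  obtain ⟨U, V, σ, h, -⟩ := QuaternionMatrix.exists_isSVD_forall_le_norm X
  exact ⟨U, V, σ, h.left_unitary, h.right_unitary, h.nonneg, h.antitone,
    h.eq_mul_rectDiagonal_mul⟩
end
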